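/- Let G be a connected loopless multigraph on n ≥ 3 vertices whose degree sequence realizes a partition of 2d - 2 with all parts between 1 and d - 1. Then for any two adjacent vertices v₁, v₂ with the simple-graph degree of v₁ at least 2, there exists a connected loopless multigraph G' on the same vertex set whose degree sequence agrees with that of G except that the degree of v₁ is decreased by 1 and the degree of v₂ is increased by 1. -/

import Mathlib

open scoped BigOperators

/-- A loopless multigraph on `Fin n` is encoded by a symmetric edge-multiplicity
function `w` vanishing on the diagonal. -/
def IsMultigraph {n : ℕ} (w : Fin n → Fin n → ℕ) : Prop :=
  (∀ i j, w i j = w j i) ∧ (∀ i, w i i = 0)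

/-- The degree of vertex `i` in the multigraph `w`. -/
def mdeg {n : ℕ} (w : Fin n → Fin n → ℕ) (i : Fin n) : ℕ := ∑ j, w i j

/-- The underlying simple graph of a multigraph `w`. -/
def mSimple {n : ℕ} (w : Fin n → Fin n → ℕ) : SimpleGraph (Fin n) :=
  SimpleGraph.fromRel (fun i j => 0 < w i j)

/-- The simple-graph degree of `i`: the number of distinct neighbors of `i`. -/
def sdeg {n : ℕ} (w : Fin n → Fin n → ℕ) (i : Fin n) : ℕ :=
  (Finset.univ.filter fun j => 0 < w i j).card

/-! Pick a neighbour `u ≠ v₂` of `v₁` and replace one copy of the edge `uv₁` by `uv₂`. Only the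
degrees of `v₁` and `v₂` change, and connectivity survives because the edge `v₁v₂` is untouched,
so the removed edge `uv₁` is bypassed by the path `u v₂ v₁`. -/

lemma SimpleGraph.Preconnected.of_adj_reachable {V : Type*} {G G' : SimpleGraph V}
    (hG : G.Preconnected) (h : ∀ a b, G.Adj a b → G'.Reachable a b) : G'.Preconnected := by
  simp only [SimpleGraph.Preconnected, SimpleGraph.reachable_iff_reflTransGen] at hG h ⊢
  exact fun a b ↦ Relation.reflTransGen_closed h a b (hG a b)

lemma mSimple_adj_of_pos {n : ℕ} {w : Fin n → Fin n → ℕ} {i j : Fin n} (hij : i ≠ j)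
    (h : 0 < w i j) : (mSimple w).Adj i j :=
  (SimpleGraph.fromRel_adj _ _ _).mpr ⟨hij, Or.inl h⟩

namespace IsMultigraph

variable {n : ℕ} {w v : Fin n → Fin n → ℕ}

lemma add (hw : IsMultigraph w) (hv : IsMultigraph v) : IsMultigraph (w + v) :=
  ⟨fun i j ↦ by simp [hw.1 i j, hv.1 i j], fun i ↦ by simp [hw.2 i, hv.2 i]⟩

lemma tsub (hw : IsMultigraph w) (hv : IsMultigraph v) : IsMultigraph (w - v) :=
  ⟨fun i j ↦ by simp [hw.1 i j, hv.1 i j], fun i ↦ by simp [hw.2 i]⟩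

lemma ne_of_pos (hw : IsMultigraph w) {i j : Fin n} (h : 0 < w i j) : i ≠ j := by
  rintro rfl
  simp [hw.2 i] at h

lemma mSimple_adj (hw : IsMultigraph w) {i j : Fin n} : (mSimple w).Adj i j ↔ 0 < w i j := by
  simp only [mSimple, SimpleGraph.fromRel_adj, hw.1 j i, or_self]
  exact ⟨And.right, fun h ↦ ⟨hw.ne_of_pos h, h⟩⟩

end IsMultigraph

section EdgeShift

open Finset

variable {n : ℕ}

lemma mdeg_add (w v : Fin n → Fin n → ℕ) (i : Fin n) : mdeg (w + v) i = mdeg w i + mdeg v i :=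
  sum_add_distrib

lemma mdeg_tsub {w v : Fin n → Fin n → ℕ} (hvw : v ≤ w) (i : Fin n) :
    mdeg (w - v) i = mdeg w i - mdeg v i :=
  sum_tsub_distrib _ fun j _ ↦ hvw i j

lemma mdeg_mono {w v : Fin n → Fin n → ℕ} (hvw : v ≤ w) (i : Fin n) : mdeg v i ≤ mdeg w i :=
  sum_le_sum fun j _ ↦ hvw i j

def unitEdge (a b : Fin n) : Fin n → Fin n → ℕ := fun i j ↦ if s(i, j) = s(a, b) then 1 else 0

lemma isMultigraph_unitEdge {a b : Fin n} (hab : a ≠ b) : IsMultigraph (unitEdge a b) :=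
  ⟨fun i j ↦ by simp only [unitEdge, Sym2.eq_swap],
    fun i ↦ if_neg fun h : s(i, i) = s(a, b) ↦
      hab (Sym2.mk_isDiag_iff.mp (h ▸ Sym2.mk_isDiag_iff.mpr rfl))⟩

lemma mdeg_unitEdge {a b : Fin n} (hab : a ≠ b) (i : Fin n) :
    mdeg (unitEdge a b) i = (if i = a then 1 else 0) + (if i = b then 1 else 0) := by
  simp only [mdeg, unitEdge, Sym2.eq_iff]
  by_cases hia : i = a
  · subst hia
    simp [hab]
  by_cases hib : i = b
  · subst hib
    simp [Ne.symm hab]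
  simp [hia, hib]

lemma unitEdge_le {w : Fin n → Fin n → ℕ} (hw : IsMultigraph w) {a b : Fin n} (hab : 0 < w a b) :
    unitEdge a b ≤ w := by
  intro i j
  simp only [unitEdge, Sym2.eq_iff]
  split_ifs with h
  · have := hw.1 i j
    rcases h with ⟨rfl, rfl⟩ | ⟨rfl, rfl⟩ <;> omega
  · exact Nat.zero_le _

def shiftEdge (w : Fin n → Fin n → ℕ) (u a b : Fin n) : Fin n → Fin n → ℕ :=
  w - unitEdge u a + unitEdge u b

variable {w : Fin n → Fin n → ℕ} {u a b : Fin n}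

lemma IsMultigraph.shiftEdge (hw : IsMultigraph w) (hua : 0 < w u a) (hub : u ≠ b) :
    IsMultigraph (shiftEdge w u a b) :=
  (hw.tsub (isMultigraph_unitEdge (hw.ne_of_pos hua))).add (isMultigraph_unitEdge hub)

lemma mdeg_shiftEdge (hw : IsMultigraph w) (hua : 0 < w u a) (hub : u ≠ b) (i : Fin n) :
    mdeg (shiftEdge w u a b) i + (if i = a then 1 else 0) = mdeg w i + (if i = b then 1 else 0) := by
  have hle := unitEdge_le hw hua
  have hdeg := mdeg_mono hle i
  rw [shiftEdge, mdeg_add, mdeg_tsub hle, mdeg_unitEdge (hw.ne_of_pos hua),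
    mdeg_unitEdge hub] at *
  omega

lemma shiftEdge_pos_of_ne {i j : Fin n} (hij : 0 < w i j) (hne : s(i, j) ≠ s(u, a)) :
    0 < shiftEdge w u a b i j := by
  simp only [shiftEdge, unitEdge, Pi.add_apply, Pi.sub_apply, hne, if_false]
  omega

lemma shiftEdge_pos_new : 0 < shiftEdge w u a b u b := by
  simp [shiftEdge, unitEdge]

lemma SimpleGraph.Connected.mSimple_shiftEdge (hconn : (mSimple w).Connected) (hw : IsMultigraph w)
    (hab : 0 < w a b) (hub : u ≠ b) : (mSimple (shiftEdge w u a b)).Connected := by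
  have hba : 0 < shiftEdge w u a b b a := by
    refine shiftEdge_pos_of_ne (hw.1 a b ▸ hab) fun h ↦ ?_
    rcases Sym2.eq_iff.mp h with ⟨rfl, -⟩ | ⟨rfl, -⟩
    exacts [hub rfl, hw.ne_of_pos hab rfl]
  have hua : (mSimple (shiftEdge w u a b)).Reachable u a :=
    (mSimple_adj_of_pos hub shiftEdge_pos_new).reachable.trans
      (mSimple_adj_of_pos (hw.ne_of_pos hab).symm hba).reachable
  refine (SimpleGraph.connected_iff _).mpr ⟨hconn.preconnected.of_adj_reachable fun i j hij ↦ ?_,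
    hconn.nonempty⟩
  rw [hw.mSimple_adj] at hij
  by_cases he : s(i, j) = s(u, a)
  · rcases Sym2.eq_iff.mp he with ⟨rfl, rfl⟩ | ⟨rfl, rfl⟩
    exacts [hua, hua.symm]
  · exact (mSimple_adj_of_pos (hw.ne_of_pos hij) (shiftEdge_pos_of_ne hij he)).reachable

end EdgeShift

theorem degree_shift_lemma_general
    (n : ℕ)
    (w : Fin n → Fin n → ℕ) (hw : IsMultigraph w)
    (hconn : (mSimple w).Connected)
    (v₁ v₂ : Fin n) (hadj : 0 < w v₁ v₂)
    (hsdeg : 2 ≤ sdeg w v₁) :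
    ∃ w' : Fin n → Fin n → ℕ,
      IsMultigraph w' ∧ (mSimple w').Connected ∧
      (∀ v, v ≠ v₁ → v ≠ v₂ → mdeg w' v = mdeg w v) ∧
      mdeg w' v₁ + 1 = mdeg w v₁ ∧
      mdeg w' v₂ = mdeg w v₂ + 1 := by
  obtain ⟨u, hu, hu₂⟩ := Finset.exists_mem_ne (hsdeg.trans_lt' one_lt_two) v₂
  have hu₁ : 0 < w u v₁ := hw.1 v₁ u ▸ (Finset.mem_filter.mp hu).2
  have hv₁₂ := hw.ne_of_pos hadj
  have hdeg := mdeg_shiftEdge (b := v₂) hw hu₁ hu₂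
  refine ⟨shiftEdge w u v₁ v₂, hw.shiftEdge hu₁ hu₂, hconn.mSimple_shiftEdge hw hadj hu₂,
    fun v h₁ h₂ ↦ by simpa [h₁, h₂] using hdeg v, by simpa [hv₁₂] using hdeg v₁,
    by simpa [hv₁₂.symm] using hdeg v₂⟩

/-- Let `G` be a connected loopless multigraph on `n ≥ 3` vertices whose degree
sequence realizes a partition of `2d - 2` with all parts between `1` and `d - 1`.
For any adjacent vertices `v₁, v₂` with the simple-graph degree of `v₁` at least 2,
there is a connected loopless multigraph `G'` on the same vertex set whose degree
sequence agrees with that of `G` except that the degree of `v₁` drops by 1 and the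
degree of `v₂` rises by 1. -/
theorem degree_shift_lemma
    (d n : ℕ) (hd : 3 ≤ d) (hn : 3 ≤ n)
    (w : Fin n → Fin n → ℕ) (hw : IsMultigraph w)
    (hconn : (mSimple w).Connected)
    (hparts : ∀ i, 1 ≤ mdeg w i ∧ mdeg w i ≤ d - 1)
    (hsum : ∑ i, mdeg w i = 2 * d - 2)
    (v₁ v₂ : Fin n) (hadj : 0 < w v₁ v₂)
    (hsdeg : 2 ≤ sdeg w v₁) :
    ∃ w' : Fin n → Fin n → ℕ,
      IsMultigraph w' ∧ (mSimple w').Connected ∧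
      (∀ v, v ≠ v₁ → v ≠ v₂ → mdeg w' v = mdeg w v) ∧
      mdeg w' v₁ + 1 = mdeg w v₁ ∧
      mdeg w' v₂ = mdeg w v₂ + 1 :=
  degree_shift_lemma_general n w hw hconn v₁ v₂ hadj hsdeg
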